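/- arXiv:0803.4457 — 2 statements merged into one kernel-verified Lean document; each statement's English description precedes it below -/
import Mathlib

section
/- For every real α > 0 and every t > 0, the function t ↦ E_{α,1}(−t^α) is differentiable at t and its derivative equals −t^{α−1} E_{α,α}(−t^α). -/
/-!
Since `Γ(αj + 1) = αj · Γ(αj)`, differentiating the entire power series `E_{α,1}` termwise gives
`E_{α,1}' = E_{α,α} / α`, and the chain rule with `d/dt (-t^α) = -α t^{α-1}` finishes. Termwise
differentiation is legitimate because `Γ` eventually dominates every exponential `c^x`, so the
coefficients `1 / Γ(βj + b)` define a power series of infinite radius.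
-/

open scoped Real

/-- Real-valued generalized Mittag-Leffler function
`E_{α,ρ}(x) = Σ_{j=0}^∞ x^j / Γ(αj + ρ)`. -/
noncomputable def mittagLefflerReal (α ρ x : ℝ) : ℝ :=
  ∑' j : ℕ, x ^ j / Real.Gamma (α * j + ρ)

open Filter Real

theorem eventually_rpow_le_Gamma (c : ℝ) : ∀ᶠ x in atTop, c ^ x ≤ Gamma x := by
  set C : ℕ := ⌈|c|⌉₊ + 1
  have hC : (1 : ℝ) ≤ C := by simp [C]
  obtain ⟨N, hN⟩ := eventually_atTop.1 (Nat.eventually_pow_lt_factorial_sub C 2)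
  filter_upwards [eventually_ge_atTop ((N : ℝ) + 2)] with x hx
  have hx0 : 0 ≤ x := by linarith [N.cast_nonneg (α := ℝ)]
  set n := ⌊x⌋₊
  have hn : N + 2 ≤ n := Nat.le_floor (by push_cast; linarith)
  have hnx : (n : ℝ) ≤ x := Nat.floor_le hx0
  have hGamma_n : Gamma n = (n - 1).factorial := by
    rw [← Gamma_nat_eq_factorial, Nat.cast_sub (by omega)]
    ring_nf
  calc c ^ x ≤ |c| ^ x := (le_abs_self _).trans (abs_rpow_le_abs_rpow c x)
    _ ≤ (C : ℝ) ^ x := by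
      gcongr
      push_cast [C]
      linarith [Nat.le_ceil |c|]
    _ ≤ (C : ℝ) ^ ((n + 1 : ℕ) : ℝ) := by
      gcongr
      push_cast
      exact (Nat.lt_floor_add_one x).le
    _ ≤ (n - 1).factorial := by
      rw [rpow_natCast]; exact_mod_cast (hN (n + 1) (by omega)).le
    _ ≤ Gamma x := by
      rw [← hGamma_n]
      have hn2 : (2 : ℝ) ≤ n := by exact_mod_cast (by omega : 2 ≤ n)
      exact Gamma_strictMonoOn_Ici.monotoneOn hn2 (hn2.trans hnx) hnx

theorem summable_pow_div_Gamma_mul_add {β : ℝ} (hβ : 0 < β) (b r : ℝ) :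
    Summable fun j : ℕ => r ^ j / Gamma (β * j + b) := by
  set c := (2 * |r| + 1) ^ β⁻¹
  have hc : 0 < c := by positivity
  have hcβ : c ^ β = 2 * |r| + 1 := rpow_inv_rpow (by positivity) hβ.ne'
  set q := |r| / (2 * |r| + 1)
  have hq : q < 1 := (div_lt_one (by positivity)).2 (by linarith [abs_nonneg r])
  refine .of_norm_bounded_eventually
    ((summable_geometric_of_lt_one (by positivity) hq).mul_left (c ^ b)⁻¹) ?_
  have hx : Tendsto (fun j : ℕ => β * j + b) atTop atTop :=
    tendsto_atTop_add_const_right _ b (tendsto_natCast_atTop_atTop.const_mul_atTop hβ)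
  rw [Nat.cofinite_eq_atTop]
  filter_upwards [hx.eventually (eventually_rpow_le_Gamma c)] with j hj
  have hpow : c ^ (β * j + b) = (2 * |r| + 1) ^ j * c ^ b := by
    rw [rpow_add hc, rpow_mul hc.le, hcβ, rpow_natCast]
  have hΓ : 0 < Gamma (β * j + b) := (rpow_pos_of_pos hc _).trans_le hj
  rw [norm_div, norm_pow, Real.norm_eq_abs, Real.norm_eq_abs, abs_of_pos hΓ, div_le_iff₀ hΓ]
  calc |r| ^ j = (c ^ b)⁻¹ * q ^ j * c ^ (β * j + b) := by
        rw [hpow, div_pow]; field_simp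
    _ ≤ (c ^ b)⁻¹ * q ^ j * Gamma (β * j + b) := by gcongr

theorem hasDerivAt_tsum_mul_pow {𝕜 : Type*} [RCLike 𝕜] {a : ℕ → 𝕜}
    (ha : ∀ r : ℝ, Summable fun n => ‖a n‖ * r ^ n) (x : 𝕜) :
    HasDerivAt (fun y => ∑' n, a n * y ^ n) (∑' n, (n + 1) * a (n + 1) * x ^ n) x := by
  set R := ‖x‖ + 1
  have hR : 1 ≤ R := by simp [R]
  have hx : x ∈ Metric.ball (0 : 𝕜) R := by simp [R]
  have hbound : ∀ n (y : 𝕜), y ∈ Metric.ball 0 R →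
      ‖a n * (n * y ^ (n - 1))‖ ≤ ‖a n‖ * (2 * R) ^ n := by
    intro n y hy
    rw [mem_ball_zero_iff] at hy
    rw [norm_mul, norm_mul, norm_pow, RCLike.norm_natCast, mul_pow]
    refine mul_le_mul_of_nonneg_left ?_ (norm_nonneg _)
    calc (n : ℝ) * ‖y‖ ^ (n - 1) ≤ 2 ^ n * R ^ (n - 1) := by
          gcongr
          exact_mod_cast Nat.lt_two_pow_self.le
      _ ≤ 2 ^ n * R ^ n := by gcongr; exact Nat.sub_le n 1
  have hderiv := hasDerivAt_tsum_of_isPreconnected (ha (2 * R)) Metric.isOpen_ball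
    (convex_ball 0 R).isPreconnected (fun n y _ => (hasDerivAt_pow n y).const_mul (a n))
    hbound hx ((ha ‖x‖).of_norm_bounded fun n => by rw [norm_mul, norm_pow]) hx
  have hsummable : Summable fun n => a n * (n * x ^ (n - 1)) :=
    (ha (2 * R)).of_norm_bounded fun n => hbound n x hx
  refine hderiv.congr_deriv ?_
  rw [hsummable.tsum_eq_zero_add]
  simp only [CharP.cast_eq_zero, zero_mul, mul_zero, zero_add, Nat.cast_add, Nat.cast_one,
    add_tsub_cancel_right]
  exact tsum_congr fun n => by ring

theorem hasDerivAt_mittagLefflerReal_one {α : ℝ} (hα : 0 < α) (x : ℝ) :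
    HasDerivAt (mittagLefflerReal α 1) (mittagLefflerReal α α x / α) x := by
  have hGamma_pos (n : ℕ) : 0 < Gamma (α * n + 1) := Gamma_pos_of_pos (by positivity)
  have hseries : mittagLefflerReal α 1 = fun y => ∑' n : ℕ, (Gamma (α * n + 1))⁻¹ * y ^ n := by
    ext y
    exact tsum_congr fun n => div_eq_inv_mul _ _
  have hcoeff (n : ℕ) : ((n + 1 : ℕ) : ℝ) * (Gamma (α * (n + 1 : ℕ) + 1))⁻¹ * x ^ n =
      x ^ n / Gamma (α * n + α) / α := by
    have hpos : 0 < α * n + α := by positivity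
    rw [show α * (n + 1 : ℕ) + 1 = (α * n + α) + 1 by push_cast; ring, Gamma_add_one hpos.ne']
    field_simp
    push_cast
    ring
  rw [hseries]
  refine (hasDerivAt_tsum_mul_pow (fun r => ?_) x).congr_deriv ?_
  · simpa [abs_of_pos (hGamma_pos _), div_eq_inv_mul] using
      summable_pow_div_Gamma_mul_add hα 1 r
  · simp_rw [mittagLefflerReal, ← tsum_div_const, ← hcoeff]
    push_cast
    rfl

/-- For `α > 0` and `t > 0`, `d/dt E_{α,1}(−t^α) = −t^{α−1} E_{α,α}(−t^α)`. -/
theorem hasDerivAt_mittagLeffler_neg_rpow (α : ℝ) (hα : 0 < α) (t : ℝ) (ht : 0 < t) :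
    HasDerivAt (fun s : ℝ => mittagLefflerReal α 1 (-(s ^ α)))
      (-(t ^ (α - 1)) * mittagLefflerReal α α (-(t ^ α))) t := by
  have hinner : HasDerivAt (fun s : ℝ => -(s ^ α)) (-(α * t ^ (α - 1))) t :=
    (hasDerivAt_rpow_const (Or.inl ht.ne')).neg
  refine ((hasDerivAt_mittagLefflerReal_one hα _).comp t hinner).congr_deriv ?_
  field_simp
end

section
/- For every real α > 0 and every t ≥ 0, the normalization relation E_{α,1}(−t^α) + ∫₀ᵗ (t−τ)^{α−1} E_{α,α}(−(t−τ)^α) dτ = 1 holds. -/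
/-!
Termwise integration gives `∫₀ᵗ s^(ρ-1) E_{α,ρ}(c s^α) ds = t^ρ E_{α,ρ+1}(c t^α)`, since
`∫₀ᵗ s^(r-1) / Γ(r) ds = t^r / Γ(r+1)`. For `ρ = α`, `c = -1` the integral in the theorem is
therefore `t^α E_{α,α+1}(-t^α)`, and the shift `E_{α,1}(x) = 1 + x E_{α,α+1}(x)` of the series
makes the two terms add up to `1`. Sum and integral may be exchanged because the bound
`Γ(y) ≥ c^(y-1) e^(-(c+1))`, from restricting Euler's integral to `(c, c+1]`, makes the
Mittag-Leffler series converge absolutely.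
-/

open scoped Real

open MeasureTheory Set Filter

lemma Real.rpow_mul_exp_neg_le_Gamma {c y : ℝ} (hc : 0 ≤ c) (hy : 1 ≤ y) :
    c ^ (y - 1) * Real.exp (-(c + 1)) ≤ Real.Gamma y := by
  have hintegrable : IntegrableOn (fun x : ℝ => Real.exp (-x) * x ^ (y - 1)) (Ioi 0) :=
    Real.GammaIntegral_convergent (by linarith)
  have hsub : Ioc c (c + 1) ⊆ Ioi 0 := fun x hx => hc.trans_lt hx.1
  calc c ^ (y - 1) * Real.exp (-(c + 1))
      = Real.exp (-(c + 1)) * c ^ (y - 1) * volume.real (Ioc c (c + 1)) := by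
        rw [Real.volume_real_Ioc, add_sub_cancel_left, max_eq_left zero_le_one, mul_one, mul_comm]
    _ ≤ ∫ x in Ioc c (c + 1), Real.exp (-x) * x ^ (y - 1) := by
        refine setIntegral_ge_of_const_le_real measurableSet_Ioc (by simp) (fun x hx => ?_)
          (hintegrable.mono_set hsub)
        gcongr
        · exact hx.2
        · exact hx.1.le
    _ ≤ ∫ x in Ioi 0, Real.exp (-x) * x ^ (y - 1) :=
        setIntegral_mono_set hintegrable
          (ae_restrict_of_forall_mem measurableSet_Ioi fun x hx =>
            mul_nonneg (Real.exp_nonneg _) (Real.rpow_nonneg (le_of_lt hx) _))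
          hsub.eventuallyLE
    _ = Real.Gamma y := (Real.Gamma_eq_integral (by linarith)).symm

lemma summable_pow_div_Gamma {a : ℝ} (ha : 0 < a) (b x : ℝ) :
    Summable fun j : ℕ => x ^ j / Real.Gamma (a * j + b) := by
  -- `c ^ a = |x| + 1` makes the bound on `Γ` dominate the series by a geometric one.
  set c := (|x| + 1) ^ a⁻¹
  have hc : 0 < c := by positivity
  have hca : c ^ a = |x| + 1 := Real.rpow_inv_rpow (by positivity) ha.ne'
  set r := |x| / (|x| + 1)
  have hr : r < 1 := (div_lt_one (by positivity)).2 (lt_add_one _)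
  refine Summable.of_norm_bounded_eventually_nat
    ((summable_geometric_of_lt_one (by positivity) hr).mul_left (c ^ (1 - b) * Real.exp (c + 1))) ?_
  filter_upwards [eventually_ge_atTop ⌈(1 - b) / a⌉₊] with j hj
  have hy : 1 ≤ a * j + b := by
    have := (div_le_iff₀ ha).1 ((Nat.le_ceil _).trans (Nat.cast_le.2 hj))
    linarith
  have hsplit : c ^ (a * j + b - 1) = (|x| + 1) ^ j * c ^ (b - 1) := by
    rw [add_sub_assoc, Real.rpow_add hc, Real.rpow_mul hc.le, hca, Real.rpow_natCast]
  calc ‖x ^ j / Real.Gamma (a * j + b)‖ = |x| ^ j / Real.Gamma (a * j + b) := by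
        rw [norm_div, norm_pow, Real.norm_eq_abs, Real.norm_of_nonneg
          (Real.Gamma_pos_of_pos (by linarith)).le]
    _ ≤ |x| ^ j / (c ^ (a * j + b - 1) * Real.exp (-(c + 1))) := by
        gcongr
        exact Real.rpow_mul_exp_neg_le_Gamma hc.le hy
    _ = c ^ (1 - b) * Real.exp (c + 1) * r ^ j := by
        rw [hsplit, div_pow, Real.exp_neg, show 1 - b = -(b - 1) by ring, Real.rpow_neg hc.le]
        field_simp

lemma mittagLefflerReal_eq_inv_Gamma_add_mul {α : ℝ} (hα : 0 < α) (ρ x : ℝ) :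
    mittagLefflerReal α ρ x = (Real.Gamma ρ)⁻¹ + x * mittagLefflerReal α (α + ρ) x := by
  rw [mittagLefflerReal, (summable_pow_div_Gamma hα ρ x).tsum_eq_zero_add, mittagLefflerReal,
    ← tsum_mul_left]
  congr 1
  · simp
  · refine tsum_congr fun j => ?_
    rw [pow_succ', mul_div_assoc]
    push_cast
    ring_nf

lemma integral_rpow_sub_one_div_Gamma {r : ℝ} (hr : 0 < r) (t : ℝ) :
    ∫ s in 0..t, s ^ (r - 1) / Real.Gamma r = t ^ r / Real.Gamma (r + 1) := by
  rw [intervalIntegral.integral_div, integral_rpow (Or.inl (by linarith)), sub_add_cancel,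
    Real.zero_rpow hr.ne', sub_zero, Real.Gamma_add_one hr.ne', div_div]

lemma rpow_sub_one_mul_mittagLefflerReal {α ρ s : ℝ} (hs : 0 < s) (c : ℝ) :
    s ^ (ρ - 1) * mittagLefflerReal α ρ (c * s ^ α) =
      ∑' j : ℕ, c ^ j * (s ^ (α * j + ρ - 1) / Real.Gamma (α * j + ρ)) := by
  rw [mittagLefflerReal, ← tsum_mul_left]
  refine tsum_congr fun j => ?_
  rw [mul_pow, ← Real.rpow_natCast (s ^ α), ← Real.rpow_mul hs.le,
    show α * j + ρ - 1 = α * j + (ρ - 1) by ring, Real.rpow_add hs]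
  ring

theorem integral_rpow_sub_one_mul_mittagLefflerReal {α ρ : ℝ} (hα : 0 < α) (hρ : 0 < ρ)
    (c : ℝ) {t : ℝ} (ht : 0 ≤ t) :
    ∫ s in 0..t, s ^ (ρ - 1) * mittagLefflerReal α ρ (c * s ^ α) =
      t ^ ρ * mittagLefflerReal α (ρ + 1) (c * t ^ α) := by
  have hr : ∀ j : ℕ, 0 < α * j + ρ := fun j => by positivity
  have hterm_integral : ∀ (d : ℝ) (j : ℕ),
      ∫ s in Ioc 0 t, d ^ j * (s ^ (α * j + ρ - 1) / Real.Gamma (α * j + ρ)) =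
        t ^ ρ * ((d * t ^ α) ^ j / Real.Gamma (α * j + (ρ + 1))) := fun d j => by
    rw [integral_const_mul, ← intervalIntegral.integral_of_le ht,
      integral_rpow_sub_one_div_Gamma (hr j), ← add_assoc, mul_pow,
      ← Real.rpow_natCast (t ^ α), ← Real.rpow_mul ht, Real.rpow_add' ht (hr j).ne']
    ring
  have hterm_int : ∀ j : ℕ, IntegrableOn
      (fun s => c ^ j * (s ^ (α * j + ρ - 1) / Real.Gamma (α * j + ρ))) (Ioc 0 t) := fun j =>
    (((intervalIntegrable_iff_integrableOn_Ioc_of_le ht).1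
      (intervalIntegral.intervalIntegrable_rpow' (by linarith [hr j]))).div_const _).const_mul _
  have hnorm : ∀ j : ℕ,
      ∫ s in Ioc 0 t, ‖c ^ j * (s ^ (α * j + ρ - 1) / Real.Gamma (α * j + ρ))‖ =
        t ^ ρ * ((|c| * t ^ α) ^ j / Real.Gamma (α * j + (ρ + 1))) := fun j => by
    rw [← hterm_integral]
    refine setIntegral_congr_fun measurableSet_Ioc fun s hs => ?_
    rw [norm_mul, norm_pow, Real.norm_eq_abs, Real.norm_of_nonneg
      (div_nonneg (Real.rpow_nonneg hs.1.le _) (Real.Gamma_pos_of_pos (hr j)).le)]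
  calc ∫ s in 0..t, s ^ (ρ - 1) * mittagLefflerReal α ρ (c * s ^ α)
      = ∫ s in Ioc 0 t, ∑' j : ℕ, c ^ j * (s ^ (α * j + ρ - 1) / Real.Gamma (α * j + ρ)) := by
        rw [intervalIntegral.integral_of_le ht]
        exact setIntegral_congr_fun measurableSet_Ioc fun s hs =>
          rpow_sub_one_mul_mittagLefflerReal hs.1 c
    _ = ∑' j : ℕ, ∫ s in Ioc 0 t, c ^ j * (s ^ (α * j + ρ - 1) / Real.Gamma (α * j + ρ)) :=
        (integral_tsum_of_summable_integral_norm hterm_int <| by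
          simpa only [hnorm] using (summable_pow_div_Gamma hα _ _).mul_left (t ^ ρ)).symm
    _ = t ^ ρ * mittagLefflerReal α (ρ + 1) (c * t ^ α) := by
        simp only [hterm_integral, tsum_mul_left, mittagLefflerReal]

/-- Normalization: `E_{α,1}(−t^α) + ∫₀ᵗ (t−τ)^{α−1} E_{α,α}(−(t−τ)^α) dτ = 1`. -/
theorem normalization_branching_process (α : ℝ) (hα : 0 < α) (t : ℝ) (ht : 0 ≤ t) :
    mittagLefflerReal α 1 (-(t ^ α)) +
      ∫ τ in (0:ℝ)..t, (t - τ) ^ (α - 1) * mittagLefflerReal α α (-((t - τ) ^ α)) = 1 := by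
  have hsurvival := mittagLefflerReal_eq_inv_Gamma_add_mul hα 1 (-(t ^ α))
  have hdensity := integral_rpow_sub_one_mul_mittagLefflerReal hα hα (-1) ht
  simp only [neg_one_mul] at hdensity
  rw [intervalIntegral.integral_comp_sub_left
    (fun s => s ^ (α - 1) * mittagLefflerReal α α (-(s ^ α))) t, sub_self, sub_zero, hdensity,
    hsurvival, Real.Gamma_one, inv_one]
  ring
end
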